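/- arXiv:2004.04291 — 2 statements merged into one kernel-verified Lean document; each statement's English description precedes it below -/
import Mathlib

section
/- Let p and q be distinct primes with q ≢ 1 (mod p). On the set B = ℤ/p × ℤ/p × ℤ/q with componentwise addition +, define (x₁,x₂,x₃) ∘ (y₁,y₂,y₃) = (x₁ + y₁ + x₂·y₂, x₂ + y₂, x₃ + y₃). Then (B,+,∘) is a left brace, the kernel of λ has order pq, and (B,∘) is an abelian group isomorphic to ℤ/p × ℤ/p × ℤ/q. Moreover, up to brace isomorphism it is the unique left brace with additive group ℤ/p × ℤ/p × ℤ/q whose kernel of λ has order pq. -/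
/-- `f` is a left-brace multiplication on the abelian group `B`: `(B, f)` is a group
with identity `0` and `f a (b + c) = f a b - a + f a c` holds. -/
def IsLeftBrace {B : Type*} [AddCommGroup B] (f : B → B → B) : Prop :=
  (∀ a b c, f (f a b) c = f a (f b c)) ∧
  (∀ a, f 0 a = a) ∧
  (∀ a, f a 0 = a) ∧
  (∀ a, ∃ a', f a' a = 0) ∧
  (∀ a b c, f a (b + c) = f a b - a + f a c)

/-- The kernel of `λ`: the set of `a` with `λ_a = id`, i.e. `a ∘ b = a + b` for all `b`. -/
def kerLambda {B : Type*} [AddCommGroup B] (f : B → B → B) : Set B :=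
  {a | ∀ b, f a b = a + b}

/-- The circle operation
`(x₁,x₂,x₃) ∘ (y₁,y₂,y₃) = (x₁ + y₁ + x₂ y₂, x₂ + y₂, x₃ + y₃)` on `ℤ/p × ℤ/p × ℤ/q`. -/
def circ8 (p q : ℕ) :
    ZMod p × ZMod p × ZMod q → ZMod p × ZMod p × ZMod q → ZMod p × ZMod p × ZMod q :=
  fun x y => (x.1 + y.1 + x.2.1 * y.2.1, x.2.1 + y.2.1, x.2.2 + y.2.2)

/-!
If `|B| = p²q` and `|ker λ| = pq`, then `λ` has image of order `p` and `ker λ` is cyclic of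
order `pq`. Since `p` is prime to `(p - 1)(q - 1)` (this is where `q ≢ 1 (mod p)` enters), `λ`
fixes `ker λ` pointwise; it follows that the star product `a * b = λ_a(b) - b` takes values in
`ker λ`, vanishes as soon as one argument lies in `ker λ`, and is biadditive. It therefore
factors through `B / ker λ ≅ ℤ/p`, and for `e₂ ∉ ker λ` of order `p`, `e₁ = e₂ * e₂` and
`e₃ ∈ ker λ` of order `q`, the map `(u, v, w) ↦ u e₁ + v e₂ + w e₃` is a brace isomorphism
from `circ8`.
-/

theorem AddMonoid.End.apply_eq_self_of_pow_eq_one {G : Type*} [AddCommGroup G]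
    {f : AddMonoid.End G} {n : ℕ} (hn : n ≠ 0) (hf : f ^ n = 1) {y : G} {m : ℤ}
    (hy : f y = m • y) (hcop : n.Coprime (addOrderOf y).totient) : f y = y := by
  have hpow : ∀ k : ℕ, (f ^ k) y = (m ^ k) • y := by
    intro k
    induction k with
    | zero => simp
    | succ k ih =>
      rw [pow_succ', AddMonoid.End.coe_mul, Function.comp_apply, ih, map_zsmul, hy, smul_smul,
        pow_succ]
  have hu : ((m : ZMod (addOrderOf y)) ^ n = 1) := by
    have h := hpow n
    rw [hf, AddMonoid.End.coe_one, id_eq, eq_comm, ← one_zsmul y, smul_smul, mul_one,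
      zsmul_eq_zsmul_iff_modEq, ← ZMod.intCast_eq_intCast_iff] at h
    exact_mod_cast h
  let u := Units.ofPowEqOne _ n hu hn
  have hu1 : orderOf u = 1 :=
    Nat.eq_one_of_dvd_coprimes hcop (orderOf_dvd_of_pow_eq_one (Units.pow_ofPowEqOne hu hn))
      (orderOf_dvd_of_pow_eq_one (ZMod.pow_totient u))
  have hm : ((m : ZMod (addOrderOf y))) = ((1 : ℤ) : ZMod (addOrderOf y)) := by
    rw [← Units.val_ofPowEqOne _ n hu hn, show Units.ofPowEqOne _ n hu hn = 1 from
      orderOf_eq_one_iff.1 hu1, Units.val_one, Int.cast_one]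
  rw [hy, ← one_zsmul y, smul_smul, mul_one, zsmul_eq_zsmul_iff_modEq]
  exact (ZMod.intCast_eq_intCast_iff _ _ _).1 hm

namespace AddSubgroup

variable {G : Type*} [AddCommGroup G]

theorem mem_of_zsmul_mem_of_isCoprime {H : AddSubgroup G} {x : G} {m n : ℤ} (hmn : IsCoprime m n)
    (hm : m • x ∈ H) (hn : n • x ∈ H) : x ∈ H := by
  obtain ⟨u, v, huv⟩ := hmn
  rw [← one_zsmul x, ← huv, add_zsmul, mul_zsmul, mul_zsmul]
  exact add_mem (zsmul_mem hm u) (zsmul_mem hn v)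

theorem exists_sub_zsmul_mem_of_index_prime {H : AddSubgroup G} (hH : H.index.Prime) {x : G}
    (hx : x ∉ H) (b : G) : ∃ n : ℤ, b - n • x ∈ H := by
  have : Fact H.index.Prime := ⟨hH⟩
  have htop := zmultiples_eq_top_of_prime_card (H.index_eq_card.symm)
    (g := (x : G ⧸ H)) (by rwa [Ne, QuotientAddGroup.eq_zero_iff])
  obtain ⟨n, hn⟩ := mem_zmultiples_iff.1 (htop ▸ mem_top (b : G ⧸ H))
  refine ⟨n, ?_⟩
  rw [← QuotientAddGroup.eq_zero_iff, QuotientAddGroup.mk_sub, QuotientAddGroup.mk_zsmul, hn,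
    sub_self]

theorem exists_eq_zmultiples_of_card_eq_mul (H : AddSubgroup G) {p q : ℕ} [Fact p.Prime]
    [Fact q.Prime] (hpq : p ≠ q) (hH : Nat.card H = p * q) :
    ∃ x, addOrderOf x = p * q ∧ H = zmultiples x := by
  have : Finite H := Nat.finite_of_card_ne_zero (by rw [hH]; exact NeZero.ne _)
  obtain ⟨s, hs⟩ := exists_prime_addOrderOf_dvd_card' (G := H) p (hH ▸ dvd_mul_right p q)
  obtain ⟨t, ht⟩ := exists_prime_addOrderOf_dvd_card' (G := H) q (hH ▸ dvd_mul_left q p)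
  have hst : addOrderOf ((s + t : H) : G) = p * q := by
    rw [addOrderOf_addSubmonoid, (AddCommute.all s t).addOrderOf_add_eq_mul_addOrderOf_of_coprime
      (by rw [hs, ht]; exact (Nat.coprime_primes Fact.out Fact.out).2 hpq), hs, ht]
  refine ⟨_, hst, (eq_of_le_of_card_ge (zmultiples_le.2 (s + t).2) ?_).symm⟩
  rw [Nat.card_zmultiples, hst, hH]

end AddSubgroup

theorem Nat.Prime.coprime_totient_addOrderOf {G : Type*} [AddMonoid G] {p : ℕ} (hp : p.Prime)
    {y : G} (hy : p • y = 0) : p.Coprime (addOrderOf y).totient := by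
  rcases (Nat.dvd_prime hp).1 (addOrderOf_dvd_of_nsmul_eq_zero hy) with h | h
  · rw [h, Nat.totient_one]
    exact Nat.coprime_one_right p
  · rw [h, Nat.totient_prime hp]
    exact (Nat.coprime_self_sub_right hp.one_le).2 (Nat.coprime_one_right p)

namespace ZMod

variable {G : Type*} [AddCommGroup G] {n : ℕ}

def zmultiplesHom (x : G) (hx : n • x = 0) : ZMod n →+ G :=
  ZMod.lift n ⟨_root_.zmultiplesHom G x, by simpa using hx⟩

theorem zmultiplesHom_intCast {x : G} {hx : n • x = 0} (k : ℤ) :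
    zmultiplesHom x hx k = k • x :=
  ZMod.lift_coe _ _ _

theorem zmultiplesHom_apply {x : G} {hx : n • x = 0} (u : ZMod n) :
    zmultiplesHom x hx u = (u.cast : ℤ) • x := by
  conv_lhs => rw [← ZMod.intCast_zmod_cast u]
  exact zmultiplesHom_intCast _

theorem zmultiplesHom_injective {x : G} {hx : n • x = 0} (hord : addOrderOf x = n) :
    Function.Injective (zmultiplesHom x hx) := by
  refine (injective_iff_map_eq_zero _).2 fun u hu => ?_
  rw [zmultiplesHom_apply, ← addOrderOf_dvd_iff_zsmul_eq_zero, hord] at hu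
  rw [← ZMod.intCast_zmod_cast u, ZMod.intCast_zmod_eq_zero_iff_dvd]
  exact hu

theorem zmultiplesHom_mem {x : G} {hx : n • x = 0} {H : AddSubgroup G} (hxH : x ∈ H)
    (u : ZMod n) : zmultiplesHom x hx u ∈ H := by
  rw [zmultiplesHom_apply]
  exact zsmul_mem hxH _

theorem coprod_zmultiplesHom_injective {p q : ℕ} [Fact p.Prime] [Fact q.Prime] (hpq : p ≠ q)
    {x y : G} {hx : p • x = 0} {hy : q • y = 0} (hordx : addOrderOf x = p)
    (hordy : addOrderOf y = q) :
    Function.Injective ((zmultiplesHom x hx).coprod (zmultiplesHom y hy)) := by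
  refine (injective_iff_map_eq_zero _).2 fun t ht => ?_
  rw [AddMonoidHom.coprod_apply] at ht
  have hp0 : (p : ZMod q) ≠ 0 := by
    rw [Ne, ZMod.natCast_eq_zero_iff]
    exact fun hd => hpq ((Nat.prime_dvd_prime_iff_eq Fact.out Fact.out).1 hd).symm
  have h₂ : t.2 = 0 := by
    have h := congrArg (p • ·) ht
    simp only [smul_add, ← map_nsmul, nsmul_eq_mul, ZMod.natCast_self, zero_mul, map_zero,
      zero_add, smul_zero] at h
    exact (mul_eq_zero.1 (zmultiplesHom_injective hordy (h.trans (map_zero _).symm))).resolve_left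
      hp0
  rw [h₂, map_zero, add_zero] at ht
  exact Prod.ext (zmultiplesHom_injective hordx (ht.trans (map_zero _).symm)) h₂

end ZMod

namespace IsLeftBrace

variable {B : Type*} [AddCommGroup B] {g : B → B → B}

theorem circ_assoc (hg : IsLeftBrace g) (a b c : B) : g (g a b) c = g a (g b c) := hg.1 a b c

theorem zero_circ (hg : IsLeftBrace g) (a : B) : g 0 a = a := hg.2.1 a

theorem circ_add (hg : IsLeftBrace g) (a b c : B) : g a (b + c) = g a b - a + g a c :=
  hg.2.2.2.2 a b c

def lambda (hg : IsLeftBrace g) (a : B) : AddMonoid.End B :=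
  AddMonoidHom.mk' (fun b => -a + g a b) fun b c => by rw [hg.circ_add]; abel

theorem lambda_apply (hg : IsLeftBrace g) (a b : B) : hg.lambda a b = -a + g a b := rfl

theorem lambda_zero (hg : IsLeftBrace g) : hg.lambda 0 = 1 := by
  ext b
  simp [lambda_apply, hg.zero_circ]

theorem lambda_circ (hg : IsLeftBrace g) (a b : B) :
    hg.lambda (g a b) = hg.lambda a * hg.lambda b := by
  ext c
  have h := hg.circ_add a (hg.lambda b c) b
  rw [hg.lambda_apply b, neg_add_cancel_comm] at h
  rw [AddMonoid.End.coe_mul, Function.comp_apply, hg.lambda_apply, hg.lambda_apply a,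
    hg.circ_assoc, h, ← hg.lambda_apply]
  abel

theorem mem_kerLambda_iff (hg : IsLeftBrace g) {a : B} : a ∈ kerLambda g ↔ hg.lambda a = 1 := by
  simp only [kerLambda, Set.mem_ofPred_eq, AddMonoid.End.ext_iff, lambda_apply,
    AddMonoid.End.coe_one, id_eq, neg_add_eq_iff_eq_add]

def Circ (_hg : IsLeftBrace g) : Type _ := B

noncomputable instance (hg : IsLeftBrace g) : Group hg.Circ :=
  letI : Mul hg.Circ := ⟨g⟩
  letI : One hg.Circ := ⟨(0 : B)⟩
  letI : Inv hg.Circ := ⟨fun a => (hg.2.2.2.1 a).choose⟩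
  Group.ofLeftAxioms hg.1 hg.2.1 fun a => (hg.2.2.2.1 a).choose_spec

def toCirc (hg : IsLeftBrace g) : B ≃ hg.Circ := Equiv.refl B

def lambdaHom (hg : IsLeftBrace g) : hg.Circ →* AddMonoid.End B where
  toFun a := hg.lambda (hg.toCirc.symm a)
  map_one' := hg.lambda_zero
  map_mul' := hg.lambda_circ

theorem mem_ker_lambdaHom (hg : IsLeftBrace g) {a : B} :
    hg.toCirc a ∈ hg.lambdaHom.ker ↔ a ∈ kerLambda g :=
  hg.mem_kerLambda_iff.symm

theorem card_ker_lambdaHom (hg : IsLeftBrace g) :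
    Nat.card hg.lambdaHom.ker = Nat.card (kerLambda g) :=
  Nat.card_congr (hg.toCirc.symm.subtypeEquiv fun _ => hg.mem_ker_lambdaHom)

theorem lambdaHom_toCirc (hg : IsLeftBrace g) (a : B) : hg.lambdaHom (hg.toCirc a) = hg.lambda a :=
  rfl

theorem lambda_pow_index (hg : IsLeftBrace g) (a : B) :
    hg.lambda a ^ hg.lambdaHom.ker.index = 1 := by
  rw [← hg.lambdaHom_toCirc, ← map_pow]
  exact hg.lambdaHom.ker.pow_index_mem (hg.toCirc a)

theorem toCirc_lambda (hg : IsLeftBrace g) {k : B} (hk : k ∈ kerLambda g) (a : B) :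
    hg.toCirc (hg.lambda a k) = hg.toCirc a * hg.toCirc k * (hg.toCirc a)⁻¹ := by
  set a' := hg.toCirc.symm (hg.toCirc a)⁻¹
  have ha' : g a a' = 0 := congrArg hg.toCirc.symm (mul_inv_cancel (hg.toCirc a))
  show hg.toCirc (hg.lambda a k) = hg.toCirc (g (g a k) a')
  rw [hg.circ_assoc, hk, hg.circ_add, ha', lambda_apply]
  abel_nf

theorem lambda_mem_kerLambda (hg : IsLeftBrace g) {k : B} (hk : k ∈ kerLambda g) (a : B) :
    hg.lambda a k ∈ kerLambda g := by
  rw [← hg.mem_ker_lambdaHom, hg.toCirc_lambda hk]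
  exact hg.lambdaHom.normal_ker.conj_mem _ (hg.mem_ker_lambdaHom.2 hk) _

def kerLambdaAddSubgroup (hg : IsLeftBrace g) : AddSubgroup B where
  carrier := kerLambda g
  zero_mem' := hg.mem_kerLambda_iff.2 hg.lambda_zero
  add_mem' {a b} ha hb := by
    rw [hg.mem_kerLambda_iff, ← ha b, hg.lambda_circ,
      hg.mem_kerLambda_iff.1 ha, hg.mem_kerLambda_iff.1 hb, mul_one]
  neg_mem' {a} ha := by
    have h : g a (-a) = 0 := by rw [ha, add_neg_cancel]
    have hl := hg.lambda_circ a (-a)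
    rw [h, hg.lambda_zero, hg.mem_kerLambda_iff.1 ha, one_mul] at hl
    exact hg.mem_kerLambda_iff.2 hl.symm

/-- The star product `a * b = -a + a ∘ b - b` of braces. -/
def star (hg : IsLeftBrace g) (a : B) : AddMonoid.End B := hg.lambda a - 1

theorem star_apply (hg : IsLeftBrace g) (a b : B) : hg.star a b = hg.lambda a b - b := rfl

theorem circ_eq_add_add_star (hg : IsLeftBrace g) (a b : B) : g a b = a + b + hg.star a b := by
  rw [star_apply, lambda_apply]
  abel

theorem star_eq_zero_iff (hg : IsLeftBrace g) {a : B} : hg.star a = 0 ↔ a ∈ kerLambda g := by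
  rw [star, sub_eq_zero, hg.mem_kerLambda_iff]

theorem star_circ (hg : IsLeftBrace g) (a c : B) :
    hg.star (g a c) = hg.star a + hg.star c + hg.star a * hg.star c := by
  simp only [star, hg.lambda_circ]
  noncomm_ring

theorem star_add_left (hg : IsLeftBrace g)
    (hfix : ∀ a, ∀ k ∈ hg.kerLambdaAddSubgroup, hg.star a k = 0)
    (hmem : ∀ a b, hg.star a b ∈ hg.kerLambdaAddSubgroup) (a c : B) :
    hg.star (a + c) = hg.star a + hg.star c := by
  have hadd : ∀ z, ∀ k ∈ hg.kerLambdaAddSubgroup, hg.star (z + k) = hg.star z := by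
    intro z k hk
    rw [← add_zero (z + k), ← hfix z k hk, ← hg.circ_eq_add_add_star, star_circ,
      hg.star_eq_zero_iff.2 hk, mul_zero, add_zero, add_zero]
  have hac : a + c = g a (c - hg.star a c) := by
    rw [hg.circ_eq_add_add_star, map_sub, hfix a _ (hmem a c)]
    abel
  have hstar2 : hg.star a * hg.star c = 0 := by
    ext b
    exact hfix a _ (hmem c b)
  rw [hac, star_circ, sub_eq_add_neg, hadd c _ (neg_mem (hmem a c)), hstar2, add_zero]

theorem star_zsmul_left (hg : IsLeftBrace g)
    (hadd : ∀ a c, hg.star (a + c) = hg.star a + hg.star c) (k : ℤ) (a b : B) :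
    hg.star (k • a) b = k • hg.star a b :=
  congrArg (· b) (map_zsmul (AddMonoidHom.mk' hg.star hadd) k a)

theorem star_zmultiplesHom (hg : IsLeftBrace g)
    (hadd : ∀ a c, hg.star (a + c) = hg.star a + hg.star c) {n : ℕ} {x : B} {hx : n • x = 0}
    {hx' : n • hg.star x x = 0} (u v : ZMod n) :
    hg.star (ZMod.zmultiplesHom x hx u) (ZMod.zmultiplesHom x hx v) =
      ZMod.zmultiplesHom (hg.star x x) hx' (u * v) := by
  rw [show u * v = ((u.cast * v.cast : ℤ) : ZMod n) by push_cast [ZMod.intCast_zmod_cast]; rfl,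
    ZMod.zmultiplesHom_intCast, ZMod.zmultiplesHom_apply, ZMod.zmultiplesHom_apply,
    hg.star_zsmul_left hadd, map_zsmul, smul_smul]

theorem star_self_ne_zero (hg : IsLeftBrace g)
    (hfix : ∀ a, ∀ k ∈ hg.kerLambdaAddSubgroup, hg.star a k = 0) {x : B}
    (hx : x ∉ hg.kerLambdaAddSubgroup)
    (hdec : ∀ b, ∃ n : ℤ, b - n • x ∈ hg.kerLambdaAddSubgroup) :
    hg.star x x ≠ 0 := by
  refine fun h => hx (hg.star_eq_zero_iff.1 ?_)
  ext b
  obtain ⟨n, hn⟩ := hdec b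
  rw [← sub_add_cancel b (n • x), map_add, hfix x _ hn, map_zsmul, h, smul_zero, zero_add]
  rfl

end IsLeftBrace

theorem circ8_eq_add (p q : ℕ) (s t : ZMod p × ZMod p × ZMod q) :
    circ8 p q s t = s + t + (s.2.1 * t.2.1, 0, 0) := by
  simp [circ8, Prod.ext_iff]

theorem isLeftBrace_circ8 (p q : ℕ) : IsLeftBrace (circ8 p q) := by
  refine ⟨fun a b c => ?_, fun a => ?_, fun a => ?_,
    fun a => ⟨(-a.1 + a.2.1 * a.2.1, -a.2.1, -a.2.2), ?_⟩, fun a b c => ?_⟩ <;>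
    simp only [circ8, Prod.ext_iff, Prod.fst_add, Prod.snd_add, Prod.fst_sub, Prod.snd_sub,
      Prod.fst_zero, Prod.snd_zero] <;>
    refine ⟨?_, ?_, ?_⟩ <;> ring

theorem mem_kerLambda_circ8_iff {p q : ℕ} {a : ZMod p × ZMod p × ZMod q} :
    a ∈ kerLambda (circ8 p q) ↔ a.2.1 = 0 := by
  refine ⟨fun h => ?_, fun h b => ?_⟩
  · simpa [circ8] using congrArg Prod.fst (h (0, 1, 0))
  · simp [circ8, h, Prod.ext_iff]

theorem card_kerLambda_circ8 (p q : ℕ) : Nat.card (kerLambda (circ8 p q)) = p * q := by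
  have e : kerLambda (circ8 p q) ≃ ZMod p × ZMod q :=
    { toFun := fun a => (a.1.1, a.1.2.2)
      invFun := fun y => ⟨(y.1, 0, y.2), mem_kerLambda_circ8_iff.2 rfl⟩
      left_inv := fun a =>
        Subtype.ext (Prod.ext rfl (Prod.ext (mem_kerLambda_circ8_iff.1 a.2).symm rfl))
      right_inv := fun _ => rfl }
  rw [Nat.card_congr e, Nat.card_prod, Nat.card_zmod, Nat.card_zmod]

theorem circ8_comm (p q : ℕ) (a b : ZMod p × ZMod p × ZMod q) :
    circ8 p q a b = circ8 p q b a := by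
  simp only [circ8, Prod.ext_iff]
  refine ⟨by ring, by ring, by ring⟩

/-- Completing the square: `x ↦ (x₁ - x₂² / 2, x₂, x₃)` turns `∘` into `+`. -/
theorem exists_equiv_circ8_eq_add {p q : ℕ} (h2 : IsUnit (2 : ZMod p)) :
    ∃ e : ZMod p × ZMod p × ZMod q ≃ ZMod p × ZMod p × ZMod q,
      ∀ a b, e (circ8 p q a b) = e a + e b := by
  obtain ⟨c, hc⟩ := h2.exists_right_inv
  refine ⟨⟨fun x => (x.1 - c * x.2.1 ^ 2, x.2.1, x.2.2),
    fun x => (x.1 + c * x.2.1 ^ 2, x.2.1, x.2.2), fun x => by simp, fun x => by simp⟩,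
    fun a b => ?_⟩
  simp only [Equiv.coe_fn_mk, circ8, Prod.ext_iff, Prod.fst_add, Prod.snd_add, and_true]
  linear_combination (-(a.2.1 * b.2.1)) * hc

namespace IsLeftBrace

variable {B : Type*} [AddCommGroup B] {g : B → B → B} {p q : ℕ} [hp : Fact p.Prime]
  [hq : Fact q.Prime]

theorem index_kerLambdaAddSubgroup (hg : IsLeftBrace g) (hB : Nat.card B = p * (p * q))
    (hK : Nat.card (kerLambda g) = p * q) : hg.kerLambdaAddSubgroup.index = p := by
  have h := hg.kerLambdaAddSubgroup.card_mul_index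
  rw [hB, show Nat.card hg.kerLambdaAddSubgroup = p * q from hK] at h
  exact Nat.eq_of_mul_eq_mul_left (Nat.mul_pos hp.out.pos hq.out.pos) (h.trans (by ring))

theorem index_ker_lambdaHom (hg : IsLeftBrace g) (hB : Nat.card B = p * (p * q))
    (hK : Nat.card (kerLambda g) = p * q) : hg.lambdaHom.ker.index = p := by
  have h := hg.lambdaHom.ker.card_mul_index
  rw [show Nat.card hg.Circ = p * (p * q) from hB, hg.card_ker_lambdaHom, hK] at h
  exact Nat.eq_of_mul_eq_mul_left (Nat.mul_pos hp.out.pos hq.out.pos) (h.trans (by ring))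

theorem lambda_pow_eq_one (hg : IsLeftBrace g) (hB : Nat.card B = p * (p * q))
    (hK : Nat.card (kerLambda g) = p * q) (a : B) : hg.lambda a ^ p = 1 :=
  hg.index_ker_lambdaHom hB hK ▸ hg.lambda_pow_index a

theorem nsmul_mem_kerLambdaAddSubgroup (hg : IsLeftBrace g) (hB : Nat.card B = p * (p * q))
    (hK : Nat.card (kerLambda g) = p * q) (b : B) : p • b ∈ hg.kerLambdaAddSubgroup :=
  hg.index_kerLambdaAddSubgroup hB hK ▸ hg.kerLambdaAddSubgroup.nsmul_index_mem b

theorem exists_notMem_kerLambdaAddSubgroup (hg : IsLeftBrace g) (hB : Nat.card B = p * (p * q))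
    (hK : Nat.card (kerLambda g) = p * q) : ∃ x, x ∉ hg.kerLambdaAddSubgroup := by
  by_contra! h
  have h1 := AddSubgroup.index_eq_one.2 (AddSubgroup.eq_top_iff' _ |>.2 h)
  rw [hg.index_kerLambdaAddSubgroup hB hK] at h1
  exact hp.out.one_lt.ne' h1

theorem exists_sub_zsmul_mem (hg : IsLeftBrace g) (hB : Nat.card B = p * (p * q))
    (hK : Nat.card (kerLambda g) = p * q) {x : B} (hx : x ∉ hg.kerLambdaAddSubgroup) (b : B) :
    ∃ n : ℤ, b - n • x ∈ hg.kerLambdaAddSubgroup :=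
  AddSubgroup.exists_sub_zsmul_mem_of_index_prime
    (hg.index_kerLambdaAddSubgroup hB hK ▸ hp.out) hx b

/-- `λ` acts trivially on `ker λ`: the latter is cyclic of order `pq`, and an automorphism of
order dividing `p` of `ℤ/pq` is trivial as `p` is prime to `(p - 1)(q - 1)`. -/
theorem lambda_apply_of_mem (hg : IsLeftBrace g) (hB : Nat.card B = p * (p * q))
    (hK : Nat.card (kerLambda g) = p * q) (hpq : p ≠ q) (hmod : ¬ q ≡ 1 [MOD p]) (a : B)
    {k : B} (hk : k ∈ hg.kerLambdaAddSubgroup) : hg.lambda a k = k := by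
  obtain ⟨k₀, hord, hKeq⟩ := hg.kerLambdaAddSubgroup.exists_eq_zmultiples_of_card_eq_mul hpq hK
  have hcop : p.Coprime (q - 1) := hp.out.coprime_iff_not_dvd.2 fun hd =>
    hmod ((Nat.modEq_iff_dvd' hq.out.one_le).2 hd).symm
  have h₀ : hg.lambda a k₀ = k₀ := by
    have hmem : hg.lambda a k₀ ∈ AddSubgroup.zmultiples k₀ :=
      hKeq ▸ hg.lambda_mem_kerLambda (hKeq ▸ AddSubgroup.mem_zmultiples k₀ :) a
    obtain ⟨m, hm⟩ := AddSubgroup.mem_zmultiples_iff.1 hmem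
    refine AddMonoid.End.apply_eq_self_of_pow_eq_one hp.out.ne_zero
      (hg.lambda_pow_eq_one hB hK a) hm.symm ?_
    rw [hord, Nat.totient_mul ((Nat.coprime_primes hp.out hq.out).2 hpq),
      Nat.totient_prime hp.out, Nat.totient_prime hq.out]
    exact ((Nat.coprime_self_sub_right hp.out.one_le).2 (Nat.coprime_one_right p)).mul_right hcop
  obtain ⟨n, rfl⟩ := AddSubgroup.mem_zmultiples_iff.1 (hKeq ▸ hk)
  rw [map_zsmul, h₀]

theorem star_apply_of_mem (hg : IsLeftBrace g) (hB : Nat.card B = p * (p * q))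
    (hK : Nat.card (kerLambda g) = p * q) (hpq : p ≠ q) (hmod : ¬ q ≡ 1 [MOD p]) (a : B)
    {k : B} (hk : k ∈ hg.kerLambdaAddSubgroup) : hg.star a k = 0 := by
  rw [star_apply, hg.lambda_apply_of_mem hB hK hpq hmod a hk, sub_self]

/-- For `x ∉ ker λ` write `y = λ_a x - x = n • x + k` with `k ∈ ker λ`. Then
`λ_a y = (1 + n) • y`, so `λ_a ^ p = 1` forces `n • y = 0`: either `p ∣ n` or `y = 0`. -/
theorem star_mem (hg : IsLeftBrace g) (hB : Nat.card B = p * (p * q))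
    (hK : Nat.card (kerLambda g) = p * q) (hpq : p ≠ q) (hmod : ¬ q ≡ 1 [MOD p]) (a b : B) :
    hg.star a b ∈ hg.kerLambdaAddSubgroup := by
  set K := hg.kerLambdaAddSubgroup
  have hfix : ∀ k ∈ K, hg.star a k = 0 := fun _ => hg.star_apply_of_mem hB hK hpq hmod a
  obtain ⟨x, hx⟩ := hg.exists_notMem_kerLambdaAddSubgroup hB hK
  have hdec := hg.exists_sub_zsmul_mem hB hK hx
  suffices hax : hg.star a x ∈ K by
    obtain ⟨n, hn⟩ := hdec b
    rw [← sub_add_cancel b (n • x), map_add, hfix _ hn, map_zsmul, zero_add]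
    exact zsmul_mem hax n
  set y := hg.star a x
  obtain ⟨n, hn⟩ := hdec y
  have hstar : hg.star a y = n • y := by
    rw [← sub_add_cancel y (n • x), map_add, hfix _ hn, map_zsmul, zero_add, sub_add_cancel]
  have hpy : p • y = 0 := by
    rw [← map_nsmul, hfix _ (hg.nsmul_mem_kerLambdaAddSubgroup hB hK x)]
  have hfixy : hg.lambda a y = y := by
    refine AddMonoid.End.apply_eq_self_of_pow_eq_one hp.out.ne_zero
      (hg.lambda_pow_eq_one hB hK a) (m := 1 + n) ?_ (hp.out.coprime_totient_addOrderOf hpy)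
    rw [add_zsmul, one_zsmul, ← hstar, star_apply]
    abel
  have hny : n • y = 0 := by rw [← hstar, star_apply, hfixy, sub_self]
  by_cases hpn : (p : ℤ) ∣ n
  · obtain ⟨m, rfl⟩ := hpn
    rw [← sub_add_cancel y _]
    refine add_mem hn ?_
    rw [mul_comm, mul_zsmul, natCast_zsmul]
    exact zsmul_mem (hg.nsmul_mem_kerLambdaAddSubgroup hB hK x) m
  · refine AddSubgroup.mem_of_zsmul_mem_of_isCoprime
      ((Nat.prime_iff_prime_int.1 hp.out).coprime_iff_not_dvd.2 hpn) ?_ (hny ▸ zero_mem K)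
    rw [natCast_zsmul, hpy]
    exact zero_mem K

/-- With `e₁ = e₂ * e₂`, `e₂` spans `B` modulo `ker λ = ⟨e₁⟩ ⊕ ⟨e₃⟩` and
`(u e₂) ∘ (v e₂) = (u + v) e₂ + uv e₁`. -/
theorem exists_addEquiv_circ8_of_star (hg : IsLeftBrace g) (hB : Nat.card B = p * (p * q))
    (hpq : p ≠ q) (hfix : ∀ a, ∀ k ∈ hg.kerLambdaAddSubgroup, hg.star a k = 0)
    (hadd : ∀ a c, hg.star (a + c) = hg.star a + hg.star c) {e₂ e₃ : B}
    (hord₁ : addOrderOf (hg.star e₂ e₂) = p) (he₁ : hg.star e₂ e₂ ∈ hg.kerLambdaAddSubgroup)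
    (he₂ : p • e₂ = 0) (hord₃ : addOrderOf e₃ = q) (he₃ : e₃ ∈ hg.kerLambdaAddSubgroup) :
    ∃ F : ZMod p × ZMod p × ZMod q ≃+ B, ∀ s t, F (circ8 p q s t) = g (F s) (F t) := by
  set ι₁ := ZMod.zmultiplesHom (hg.star e₂ e₂) (hord₁ ▸ addOrderOf_nsmul_eq_zero _)
  set ι₂ := ZMod.zmultiplesHom e₂ he₂
  set ι₃ := ZMod.zmultiplesHom e₃ (hord₃ ▸ addOrderOf_nsmul_eq_zero e₃)
  set F : ZMod p × ZMod p × ZMod q →+ B := ι₁.coprod (ι₂.coprod ι₃)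
  have hK₁ : ∀ u, ι₁ u ∈ hg.kerLambdaAddSubgroup := ZMod.zmultiplesHom_mem he₁
  have hK₃ : ∀ u, ι₃ u ∈ hg.kerLambdaAddSubgroup := ZMod.zmultiplesHom_mem he₃
  have hF : ∀ s t, hg.star (F s) (F t) = ι₁ (s.2.1 * t.2.1) := by
    intro s t
    simp only [F, AddMonoidHom.coprod_apply, hadd, hg.star_eq_zero_iff.2 (hK₁ _),
      hg.star_eq_zero_iff.2 (hK₃ _), zero_add, add_zero, map_add]
    rw [hfix _ _ (hK₁ _), hfix _ _ (hK₃ _), hg.star_zmultiplesHom hadd, zero_add, add_zero]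
  have hinj : Function.Injective F := by
    refine (injective_iff_map_eq_zero F).2 fun t ht => ?_
    have h₂ : t.2.1 = 0 := by
      have h := hF (0, 1, 0) t
      rw [ht, map_zero, one_mul] at h
      exact ZMod.zmultiplesHom_injective hord₁ (h.symm.trans (map_zero ι₁).symm)
    obtain ⟨h₁, h₃⟩ := Prod.ext_iff.1 <| ZMod.coprod_zmultiplesHom_injective hpq hord₁ hord₃
      (a₁ := (t.1, t.2.2)) (a₂ := 0) (by simpa [F, h₂] using ht)
    exact Prod.ext h₁ (Prod.ext h₂ h₃)
  have : Finite B := Nat.finite_of_card_ne_zero (by rw [hB]; exact NeZero.ne _)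
  have hbij : Function.Bijective F :=
    (Nat.bijective_iff_injective_and_card F).2 ⟨hinj, by simp [hB]⟩
  refine ⟨AddEquiv.ofBijective F hbij, fun s t => ?_⟩
  simp only [AddEquiv.ofBijective_apply, circ8_eq_add, map_add, hg.circ_eq_add_add_star, hF]
  simp [F]

theorem exists_addEquiv_circ8 (hg : IsLeftBrace g) (hB : Nat.card B = p * (p * q))
    (hK : Nat.card (kerLambda g) = p * q) (hpq : p ≠ q) (hmod : ¬ q ≡ 1 [MOD p])
    (hexp : ∀ b : B, (p * q) • b = 0) :
    ∃ F : ZMod p × ZMod p × ZMod q ≃+ B, ∀ s t, F (circ8 p q s t) = g (F s) (F t) := by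
  set K := hg.kerLambdaAddSubgroup
  have hfix : ∀ a, ∀ k ∈ K, hg.star a k = 0 := fun a _ => hg.star_apply_of_mem hB hK hpq hmod a
  have hmem := hg.star_mem hB hK hpq hmod
  have hadd := hg.star_add_left hfix hmem
  obtain ⟨x, hx⟩ := hg.exists_notMem_kerLambdaAddSubgroup hB hK
  have hpx := hg.nsmul_mem_kerLambdaAddSubgroup hB hK x
  have hqx : q • x ∉ K := fun h => hx <| AddSubgroup.mem_of_zsmul_mem_of_isCoprime
    (Nat.isCoprime_iff_coprime.2 ((Nat.coprime_primes hp.out hq.out).2 hpq))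
    (by rwa [natCast_zsmul]) (by rwa [natCast_zsmul])
  have he₂ : p • q • x = 0 := by rw [smul_smul, hexp]
  have he₁ : p • hg.star (q • x) (q • x) = 0 := by rw [← map_nsmul, he₂, map_zero]
  have : Finite K :=
    Nat.finite_of_card_ne_zero (by rw [show Nat.card K = p * q from hK]; exact NeZero.ne _)
  obtain ⟨e₃, hord₃⟩ := exists_prime_addOrderOf_dvd_card' (G := K) q (hK ▸ dvd_mul_left q p)
  exact hg.exists_addEquiv_circ8_of_star hB hpq hfix hadd
    (addOrderOf_eq_prime he₁
      (hg.star_self_ne_zero hfix hqx (hg.exists_sub_zsmul_mem hB hK hqx)))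
    (hmem _ _) he₂ (by rwa [addOrderOf_addSubmonoid]) e₃.2

end IsLeftBrace

/-- Let `p, q` be distinct primes with `q ≢ 1 (mod p)`.  On `B = ℤ/p × ℤ/p × ℤ/q`,
`(x₁,x₂,x₃) ∘ (y₁,y₂,y₃) = (x₁ + y₁ + x₂ y₂, x₂ + y₂, x₃ + y₃)` makes `(B,+,∘)` a
left brace with `|ker λ| = pq`, `(B,∘)` is abelian and isomorphic to
`ℤ/p × ℤ/p × ℤ/q`, and up to brace isomorphism it is the unique left brace with
additive group `ℤ/p × ℤ/p × ℤ/q` and `|ker λ| = pq`. -/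
theorem stmt_8 (p q : ℕ) (hp : p.Prime) (hq : q.Prime) (hpq : p ≠ q)
    (hmod : ¬ q ≡ 1 [MOD p]) :
    IsLeftBrace (circ8 p q) ∧
    Nat.card ↥(kerLambda (circ8 p q)) = p * q ∧
    (∀ a b, circ8 p q a b = circ8 p q b a) ∧
    (∃ e : ZMod p × ZMod p × ZMod q ≃ ZMod p × ZMod p × ZMod q,
      ∀ a b, e (circ8 p q a b) = e a + e b) ∧
    (∀ g : ZMod p × ZMod p × ZMod q → ZMod p × ZMod p × ZMod q → ZMod p × ZMod p × ZMod q,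
      IsLeftBrace g → Nat.card ↥(kerLambda g) = p * q →
      ∃ e : ZMod p × ZMod p × ZMod q ≃ ZMod p × ZMod p × ZMod q,
        (∀ a b, e (a + b) = e a + e b) ∧
        ∀ a b, e (g a b) = circ8 p q (e a) (e b)) := by
  have := Fact.mk hp
  have := Fact.mk hq
  have hp2 : IsUnit (2 : ZMod p) := by
    have h2p : p ≠ 2 := by
      rintro rfl
      exact hmod ((hq.eq_two_or_odd).resolve_left (Ne.symm hpq))
    exact_mod_cast (ZMod.isUnit_iff_coprime 2 p).2
      ((Nat.coprime_primes Nat.prime_two hp).2 h2p.symm)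
  refine ⟨isLeftBrace_circ8 p q, card_kerLambda_circ8 p q, circ8_comm p q,
    exists_equiv_circ8_eq_add hp2, fun g hg hK => ?_⟩
  obtain ⟨F, hF⟩ := hg.exists_addEquiv_circ8 (by simp) hK hpq hmod fun b => by
    ext <;> simp
  refine ⟨F.symm.toEquiv, F.symm.map_add, fun a b => F.injective ?_⟩
  simp [hF]
end

section
/- Let q be a prime with q > 3 and q ≡ 3 (mod 4), and let A = ℤ/2 × ℤ/2 × ℤ/q. Then there is no regular subgroup G of Hol(A) such that the image π₂(G) has order 4. -/
/-- The holomorph `Hol(A) = A ⋊ Aut(A)` of a group `A`. -/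
abbrev Hol (A : Type*) [Group A] :=
  SemidirectProduct A (MulAut A) (MonoidHom.id (MulAut A))

/-- The natural action of an element `(a, f)` of `Hol(A)` on `A`: `(a, f) · x = a * f x`. -/
def holSmul {A : Type*} [Group A] (g : Hol A) (x : A) : A :=
  g.left * g.right x

/-- A subgroup `G ≤ Hol(A)` is regular if for all `x y : A` there is exactly one
`g ∈ G` with `g · x = y`. -/
def IsRegularSubgroup {A : Type*} [Group A] (G : Subgroup (Hol A)) : Prop :=
  ∀ x y : A, ∃! g : G, holSmul (g : Hol A) x = y

/-! A regular subgroup `G ≤ Hol(A)` has order `|A| = 4q`, so if `P = π₂(G)` has order 4, the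
translations in `G` form the subgroup of order `q`: the `q`-torsion `C ≅ ℤ/q`. Restriction to the
characteristic subgroup `C` maps `P` into `Aut(C) ≅ (ℤ/q)ˣ`, of order `q - 1 ≢ 0 (mod 4)`, so some
`w ∈ P` of order 2 is trivial on `C` and acts as `σ × id` with `σ` an involution of `(ℤ/2)²`.
For `g = (a, w) ∈ G` the square `g²` is a translation, so the `(ℤ/2)²`-part `u` of `a` satisfies
`u + σ u = 0`, which forces `u + σ x = x` for some `x`. Composing `g` with the translation by
`-a`'s `ℤ/q`-part then gives an element of `G` fixing `(x, 0)`, so it is trivial and `w = 1`. -/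

open SemidirectProduct

namespace IsRegularSubgroup

variable {A : Type*} [Group A] {G : Subgroup (Hol A)}

lemma bijective_holSmul (hG : IsRegularSubgroup G) (x : A) :
    Function.Bijective fun g : G => holSmul (g : Hol A) x :=
  ⟨fun _ _ h => (hG x _).unique h rfl, fun y => (hG x y).exists⟩

lemma card_eq (hG : IsRegularSubgroup G) : Nat.card G = Nat.card A :=
  Nat.card_congr (Equiv.ofBijective _ (hG.bijective_holSmul 1))

lemma eq_one_of_holSmul_eq_self (hG : IsRegularSubgroup G) {g : Hol A} (hg : g ∈ G) {x : A}
    (hx : holSmul g x = x) : g = 1 := by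
  have h1 : holSmul (1 : Hol A) x = x := by simp [holSmul]
  exact congrArg Subtype.val ((hG x x).unique (y₁ := ⟨g, hg⟩) (y₂ := 1) hx h1)

lemma right_eq_one_of_mul_left_mul_right_apply (hG : IsRegularSubgroup G) {g : Hol A}
    (hg : g ∈ G) {b : A} (hb : inl b ∈ G) {x : A} (hx : b * g.left * g.right x = x) :
    g.right = 1 := by
  have hfix : holSmul (inl b * g) x = x := by simpa [holSmul, mul_assoc] using hx
  simpa using congrArg right (hG.eq_one_of_holSmul_eq_self (mul_mem hb hg) hfix)

end IsRegularSubgroup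

lemma SemidirectProduct.card_comap_inl_mul_card_map_rightHom {N H : Type*} [Group N] [Group H]
    {φ : H →* MulAut N} (K : Subgroup (N ⋊[φ] H)) :
    Nat.card (K.comap inl) * Nat.card (K.map rightHom) = Nat.card K := by
  set f := rightHom.comp K.subtype
  have hker : Nat.card f.ker = Nat.card (K.comap inl) := by
    refine Nat.card_congr
      { toFun := fun k => ⟨((k : K) : N ⋊[φ] H).left, ?_⟩
        invFun := fun a => ⟨⟨inl (a : N), a.2⟩, by simp [f]⟩
        left_inv := ?_
        right_inv := fun a => rfl }
    · have hk : ((k : K) : N ⋊[φ] H).right = 1 := k.2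
      have : inl ((k : K) : N ⋊[φ] H).left = ((k : K) : N ⋊[φ] H) := by ext <;> simp [hk]
      simp [this]
    · intro k
      ext
      · rfl
      · exact k.2.symm
  have hrange : f.range = K.map rightHom := by
    rw [MonoidHom.range_comp, Subgroup.range_subtype]
  rw [← hker, ← hrange, ← Subgroup.index_ker, Subgroup.card_mul_index]

section Congr

variable {A B : Type*} [Group A] [Group B]

def Hol.congr (e : A ≃* B) : Hol A ≃* Hol B :=
  SemidirectProduct.congr e (MulAut.congr e) fun f => by ext; simp [MulAut.congr]

lemma holSmul_holCongr (e : A ≃* B) (g : Hol A) (x : A) :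
    holSmul (Hol.congr e g) (e x) = e (holSmul g x) := by
  simp [holSmul, Hol.congr, MulAut.congr]

lemma IsRegularSubgroup.map_holCongr {G : Subgroup (Hol A)} (hG : IsRegularSubgroup G)
    (e : A ≃* B) : IsRegularSubgroup (G.map (Hol.congr e).toMonoidHom) := by
  intro x y
  obtain ⟨g, hg, huniq⟩ := hG (e.symm x) (e.symm y)
  refine ⟨⟨Hol.congr e g, g, g.2, rfl⟩, ?_, ?_⟩
  · simpa [← holSmul_holCongr] using congrArg e hg
  · rintro ⟨_, g', hg', rfl⟩ hxy
    have : holSmul g' (e.symm x) = e.symm y := by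
      apply e.injective
      simpa [← holSmul_holCongr] using hxy
    have := huniq ⟨g', hg'⟩ this
    simp [← this]

lemma card_map_rightHom_map_holCongr (G : Subgroup (Hol A)) (e : A ≃* B) :
    Nat.card ((G.map (Hol.congr e).toMonoidHom).map rightHom) = Nat.card (G.map rightHom) := by
  have : rightHom.comp (Hol.congr e).toMonoidHom = (MulAut.congr e).toMonoidHom.comp rightHom :=
    rfl
  rw [Subgroup.map_map, this, ← Subgroup.map_map]
  exact Subgroup.card_map_of_injective (MulAut.congr e).injective

end Congr

instance Subgroup.characteristic_ker_powMonoidHom {G : Type*} [CommGroup G] (n : ℕ) :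
    (powMonoidHom n : G →* G).ker.Characteristic :=
  Subgroup.characteristic_iff_le_comap.2 fun ϕ x hx => by
    simpa [← map_pow] using congrArg ϕ hx

section ElementaryAbelianTimesCyclic

variable {V : Type*} [AddCommGroup V] [Module (ZMod 2) V] {q : ℕ}

lemma ofAdd_prod_pow_of_odd (hq : Odd q) (v : V) (c : ZMod q) :
    (Multiplicative.ofAdd (v, c)) ^ q = Multiplicative.ofAdd (v, (0 : ZMod q)) := by
  rw [← ofAdd_nsmul, Prod.smul_mk, ← Nat.cast_smul_eq_nsmul (ZMod 2), hq.natCast_zmod_two,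
    one_smul, nsmul_eq_mul, ZMod.natCast_self, zero_mul]

lemma mem_ker_powMonoidHom_iff (hq : Odd q) {x : Multiplicative (V × ZMod q)} :
    x ∈ (powMonoidHom q).ker ↔ (Multiplicative.toAdd x).1 = 0 := by
  obtain ⟨⟨v, c⟩, rfl⟩ := Multiplicative.ofAdd.surjective x
  simp [ofAdd_prod_pow_of_odd hq]

lemma card_ker_powMonoidHom (hq : Odd q) :
    Nat.card (powMonoidHom q : Multiplicative (V × ZMod q) →* _).ker = q := by
  have : NeZero q := ⟨hq.pos.ne'⟩
  have hrange : (powMonoidHom q : Multiplicative (V × ZMod q) →* _).ker =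
      (AddMonoidHom.inr V (ZMod q)).toMultiplicative.range := by
    ext x
    rw [mem_ker_powMonoidHom_iff hq]
    constructor
    · intro hx
      exact ⟨Multiplicative.ofAdd (Multiplicative.toAdd x).2, Prod.ext hx.symm rfl⟩
    · rintro ⟨c, rfl⟩
      rfl
  have hinj : Function.Injective (AddMonoidHom.inr V (ZMod q)).toMultiplicative :=
    fun _ _ h => congrArg Prod.snd h
  rw [hrange, ← Nat.card_congr (MonoidHom.ofInjective hinj).toEquiv]
  simp

lemma exists_addMonoidHom_apply_ofAdd_of_characteristic_eq_one [Fact q.Prime] (hq2 : q ≠ 2)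
    {f : MulAut (Multiplicative (V × ZMod q))}
    (hf : MulAut.characteristic (powMonoidHom q).ker f = 1) :
    ∃ σ : V →+ V, ∀ v c, f (Multiplicative.ofAdd (v, c)) = Multiplicative.ofAdd (σ v, c) := by
  have hq : Odd q := (Fact.out : q.Prime).odd_of_ne_two hq2
  let F : AddAut (V × ZMod q) := Multiplicative.toAdd (MulAutMultiplicative _ f)
  have hF : ∀ m, f (Multiplicative.ofAdd m) = Multiplicative.ofAdd (F m) := fun _ => rfl
  have hFC : ∀ c : ZMod q, F (0, c) = (0, c) := fun c => by
    have :=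
      DFunLike.congr_fun hf ⟨Multiplicative.ofAdd (0, c), (mem_ker_powMonoidHom_iff hq).2 rfl⟩
    exact congrArg Multiplicative.toAdd (congrArg Subtype.val this)
  have hFV : ∀ v : V, (F (v, 0)).2 = 0 := by
    intro v
    have h2v : (2 : ℕ) • ((v, 0) : V × ZMod q) = 0 := by
      rw [Prod.smul_mk, ← Nat.cast_smul_eq_nsmul (ZMod 2)]
      simp only [Nat.cast_ofNat, smul_zero, Prod.mk_eq_zero, and_true]
      exact smul_eq_zero_of_left rfl v
    have h2 : (2 : ZMod q) * (F (v, 0)).2 = 0 := by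
      simpa [nsmul_eq_mul, h2v] using congrArg Prod.snd (map_nsmul F 2 (v, 0))
    exact (mul_eq_zero.1 h2).resolve_left (Ring.two_ne_zero (by rwa [ZMod.ringChar_zmod_n]))
  refine ⟨(AddMonoidHom.fst V (ZMod q)).comp
    ((F : V × ZMod q →+ V × ZMod q).comp (AddMonoidHom.inl V (ZMod q))), fun v c => ?_⟩
  have : ((v, c) : V × ZMod q) = (v, 0) + (0, c) := by simp
  rw [hF, this, map_add, hFC]
  exact congrArg _ (Prod.ext (by simp) (by simp [hFV]))

end ElementaryAbelianTimesCyclic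

lemma MonoidHom.exists_orderOf_eq_two_of_card_eq_four {H K : Type*} [Group H] [Group K]
    [Finite K] (f : H →* K) (hH : Nat.card H = 4) (hK : ¬ 4 ∣ Nat.card K) :
    ∃ h, orderOf h = 2 ∧ f h = 1 := by
  have : Finite H := Nat.finite_of_card_ne_zero (by omega)
  have hrange : Nat.card f.range ∣ 4 := hH ▸ Subgroup.card_range_dvd f
  have hrange4 : Nat.card f.range ≠ 4 := fun h => hK (h ▸ f.range.card_subgroup_dvd_card)
  have hmul : Nat.card f.ker * Nat.card f.range = 4 := by
    rw [← Subgroup.index_ker, Subgroup.card_mul_index, hH]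
  have hker : 2 ∣ Nat.card f.ker := by
    have := Nat.le_of_dvd (by norm_num) hrange
    interval_cases h : Nat.card f.range <;> omega
  obtain ⟨h, hh⟩ := exists_prime_orderOf_dvd_card' 2 hker
  exact ⟨h, by rwa [Subgroup.orderOf_coe], h.2⟩

set_option maxRecDepth 10000 in
lemma exists_add_apply_eq_self {σ : ZMod 2 × ZMod 2 →+ ZMod 2 × ZMod 2}
    (hσ2 : Function.Involutive σ) (hσ : ∃ v, σ v ≠ v) {v : ZMod 2 × ZMod 2}
    (hv : v + σ v = 0) : ∃ x, v + σ x = x := by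
  have key : ∀ s : ZMod 2 × ZMod 2 → ZMod 2 × ZMod 2, (∀ a b, s (a + b) = s a + s b) →
      (∀ a, s (s a) = a) → (∃ a, s a ≠ a) → ∀ v, v + s v = 0 → ∃ x, v + s x = x := by
    decide
  exact key σ (map_add σ) hσ2 hσ v hv

namespace IsRegularSubgroup

variable {q : ℕ} {G : Subgroup (Hol (Multiplicative ((ZMod 2 × ZMod 2) × ZMod q)))}

lemma comap_inl_eq_ker_powMonoidHom (hG : IsRegularSubgroup G) (hq : Odd q)
    (hP : Nat.card (G.map rightHom) = 4) : G.comap inl = (powMonoidHom q).ker := by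
  have : NeZero q := ⟨hq.pos.ne'⟩
  have hcard : Nat.card (G.comap inl) = q := by
    have hA : Nat.card (Multiplicative ((ZMod 2 × ZMod 2) × ZMod q)) = 4 * q := by simp
    have h := card_comap_inl_mul_card_map_rightHom G
    rw [hP, hG.card_eq, hA] at h
    omega
  refine Subgroup.eq_of_le_of_card_ge (fun a ha => ?_) (by rw [hcard, card_ker_powMonoidHom hq])
  have := pow_card_eq_one' (G := G.comap inl) (x := ⟨a, ha⟩)
  rw [hcard] at this
  exact congrArg Subtype.val this

lemma right_eq_one_of_apply_ofAdd (hG : IsRegularSubgroup G)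
    (hT : ∀ a, inl a ∈ G ↔ (Multiplicative.toAdd a).1 = 0) {g : Hol _} (hg : g ∈ G)
    (hg2 : g.right ^ 2 = 1) {σ : ZMod 2 × ZMod 2 →+ ZMod 2 × ZMod 2}
    (hσ : ∀ v c, g.right (Multiplicative.ofAdd (v, c)) = Multiplicative.ofAdd (σ v, c)) :
    g.right = 1 := by
  by_cases hσ1 : ∀ v, σ v = v
  · refine MulEquiv.ext fun x => ?_
    obtain ⟨⟨v, c⟩, rfl⟩ := Multiplicative.ofAdd.surjective x
    simp [hσ, hσ1]
  rw [not_forall] at hσ1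
  have hσ2 : Function.Involutive σ := fun v => by
    have := congrArg (fun f : MulAut _ => f (Multiplicative.ofAdd (v, (0 : ZMod q)))) hg2
    simpa [pow_two, MulAut.mul_apply, hσ] using this
  set a := Multiplicative.toAdd g.left
  have hga : g.left = Multiplicative.ofAdd a := rfl
  have hgg : inl (g * g).left ∈ G := by
    have : inl (g * g).left = g * g :=
      SemidirectProduct.ext rfl (by simpa [pow_two] using hg2.symm)
    rw [this]
    exact mul_mem hg hg
  have hfix : a.1 + σ a.1 = 0 := by
    have := (hT _).1 hgg
    simpa [hga, hσ] using this
  obtain ⟨x, hx⟩ := exists_add_apply_eq_self hσ2 hσ1 hfix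
  refine hG.right_eq_one_of_mul_left_mul_right_apply hg
    ((hT (Multiplicative.ofAdd (0, -a.2))).2 rfl) (x := Multiplicative.ofAdd (x, 0)) ?_
  rw [hσ, hga, ← ofAdd_add, ← ofAdd_add]
  exact congrArg _ (Prod.ext (by simpa using hx) (by simp))

end IsRegularSubgroup

theorem IsRegularSubgroup.card_map_rightHom_ne_four {q : ℕ} [Fact q.Prime] (hq2 : q ≠ 2)
    (hq4 : ¬ 4 ∣ q - 1) {G : Subgroup (Hol (Multiplicative ((ZMod 2 × ZMod 2) × ZMod q)))}
    (hG : IsRegularSubgroup G) : Nat.card (G.map rightHom) ≠ 4 := by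
  intro hP
  have hq : Odd q := (Fact.out : q.Prime).odd_of_ne_two hq2
  set C := (powMonoidHom q : Multiplicative ((ZMod 2 × ZMod 2) × ZMod q) →* _).ker
  have : IsCyclic C := isCyclic_of_prime_card (card_ker_powMonoidHom hq)
  obtain ⟨w, hw2, hwC⟩ := ((MulAut.characteristic C).comp (G.map rightHom).subtype)
    |>.exists_orderOf_eq_two_of_card_eq_four hP
      (by rwa [IsCyclic.card_mulAut, card_ker_powMonoidHom hq, Nat.totient_prime Fact.out])
  obtain ⟨σ, hσ⟩ := exists_addMonoidHom_apply_ofAdd_of_characteristic_eq_one hq2 hwC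
  obtain ⟨g, hg, hgw⟩ := Subgroup.mem_map.1 w.2
  have hT (a) : inl a ∈ G ↔ (Multiplicative.toAdd a).1 = 0 := by
    rw [← Subgroup.mem_comap, hG.comap_inl_eq_ker_powMonoidHom hq hP, mem_ker_powMonoidHom_iff hq]
  replace hgw : g.right = w := hgw
  have hw := pow_orderOf_eq_one w
  rw [hw2] at hw
  have hw1 := hG.right_eq_one_of_apply_ofAdd hT hg
    (by rw [hgw, ← Subgroup.coe_pow, hw, Subgroup.coe_one]) (by rw [hgw]; exact hσ)
  rw [hgw, OneMemClass.coe_eq_one] at hw1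
  simp [hw1] at hw2

theorem stmt_19_general (q : ℕ) (hq : q.Prime) (hmod : q ≡ 3 [MOD 4]) :
    ¬ ∃ G : Subgroup (Hol (Multiplicative (ZMod 2 × ZMod 2 × ZMod q))),
        IsRegularSubgroup G ∧
        Nat.card (G.map SemidirectProduct.rightHom) = 4 := by
  rintro ⟨G, hG, hP⟩
  have : Fact q.Prime := ⟨hq⟩
  have hq4 : q % 4 = 3 := hmod
  let e := AddEquiv.toMultiplicative
    (AddEquiv.prodAssoc (M := ZMod 2) (N := ZMod 2) (P := ZMod q)).symm
  exact (hG.map_holCongr e).card_map_rightHom_ne_four (by omega) (by omega)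
    ((card_map_rightHom_map_holCongr G e).trans hP)

/-- Let `q > 3` be a prime with `q ≡ 3 (mod 4)` and let `A = ℤ/2 × ℤ/2 × ℤ/q`.
Then there is no regular subgroup `G ≤ Hol(A)` whose image under the projection
`π₂ : Hol(A) → Aut(A)` has order `4`. -/
theorem stmt_19 (q : ℕ) (hq : q.Prime) (hq3 : 3 < q) (hmod : q ≡ 3 [MOD 4]) :
    ¬ ∃ G : Subgroup (Hol (Multiplicative (ZMod 2 × ZMod 2 × ZMod q))),
        IsRegularSubgroup G ∧
        Nat.card (G.map SemidirectProduct.rightHom) = 4 :=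
  stmt_19_general q hq hmod
end
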